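/- arXiv:2603.11630 — 3 statements merged into one kernel-verified Lean document; each statement's English description precedes it below -/
import Mathlib

section
/- If the preorder ≼ on A has no minimal elements (for every a ∈ A there is b with b ≼ a and ¬(a ≼ b)), then the shifted preorder ≼⁺ on nonempty subsets of A also has no minimal elements: for every nonempty x ⊆ A there is a nonempty y ⊆ A with y ≼⁺ x and ¬(x ≼⁺ y). -/
def shiftRel {α : Type*} (r : α → α → Prop) (x y : Set α) : Prop :=
  ∀ a ∈ x, ∃ b ∈ y, r a b

theorem shiftRel_singleton_left {α : Type*} {r : α → α → Prop} {b : α} {x : Set α} :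
    shiftRel r {b} x ↔ ∃ a ∈ x, r b a := by
  simp [shiftRel]

theorem shiftRel_singleton_right {α : Type*} {r : α → α → Prop} {b : α} {x : Set α} :
    shiftRel r x {b} ↔ ∀ a ∈ x, r a b := by
  simp [shiftRel]

theorem shiftRel_no_minimal_general {α : Type*} (r : α → α → Prop)
    (hmin : ∀ a : α, ∃ b, r b a ∧ ¬ r a b) :
    ∀ x : Set α, x.Nonempty →
      ∃ y : Set α, y.Nonempty ∧ shiftRel r y x ∧ ¬ shiftRel r x y := by
  rintro x ⟨a, ha⟩
  obtain ⟨b, hba, hab⟩ := hmin a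
  refine ⟨{b}, Set.singleton_nonempty b, shiftRel_singleton_left.2 ⟨a, ha, hba⟩, ?_⟩
  rw [shiftRel_singleton_right]
  exact fun h => hab (h a ha)

theorem shiftRel_no_minimal {α : Type*} (r : α → α → Prop)
    (hrefl : ∀ a, r a a) (htrans : ∀ a b c, r a b → r b c → r a c)
    (hmin : ∀ a : α, ∃ b, r b a ∧ ¬ r a b) :
    ∀ x : Set α, x.Nonempty →
      ∃ y : Set α, y.Nonempty ∧ shiftRel r y x ∧ ¬ shiftRel r x y :=
  shiftRel_no_minimal_general r hmin
end

section
/- In a poset with principal downsets pr(x) = {z : z ≤ x}, suppose p₀, p₁ are incomparable elements and u, v, u', v' are elements each incomparable with p₀ and p₁ in the sense that no u-type element is ≤ p₀ or p₁ and vice versa. Define ⟨⟨u,v⟩⟩ = pr(s(u,p₀)) ∪ pr(s(v,p₁)) where s denotes join (union). Then under the disjointness hypotheses of the paper (elements of the x-sort never lie below p₀ or p₁, and p₀ ⊄ p₁, p₁ ⊄ p₀), ⟨⟨x,y⟩⟩ = ⟨⟨x',y'⟩⟩ implies x = x' and y = y'. -/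
/-- principal downset in the powerset -/
def pr {α : Type*} (w : Set α) : Set (Set α) := {z | z ⊆ w}

/-- magmatic ordered pair with tags `c₀`, `c₁` -/
def mpair {α : Type*} (c₀ c₁ x y : Set α) : Set (Set α) :=
  pr (x ∪ c₀) ∪ pr (y ∪ c₁)

/-! The two components are recovered as the generators of the two principal downsets: `x ∪ c₀`
lies in `mpair c₀ c₁ x' y'`; it cannot lie below `y' ∪ c₁` because the tag `c₀` is not contained in
`c₁` and misses the data `y'`, so `x ∪ c₀ ⊆ x' ∪ c₀`, and disjointness of the data from the tag
strips `c₀` off again. Swapping the tags gives the second component. -/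

section

variable {α : Type*} {c₀ c₁ x y x' y' z : Set α}

theorem mem_mpair_iff : z ∈ mpair c₀ c₁ x y ↔ z ⊆ x ∪ c₀ ∨ z ⊆ y ∪ c₁ := Iff.rfl

theorem mpair_swap : mpair c₀ c₁ x y = mpair c₁ c₀ y x := Set.union_comm _ _

theorem not_union_subset_union_of_not_subset (hc : ¬ c₀ ⊆ c₁) (hy : Disjoint y c₀) :
    ¬ x ∪ c₀ ⊆ y ∪ c₁ := fun h =>
  hc <| Disjoint.subset_right_of_subset_union (Set.subset_union_right.trans h) hy.symm

theorem left_subset_of_mpair_eq (hc : ¬ c₀ ⊆ c₁) (hx : Disjoint x c₀) (hy' : Disjoint y' c₀)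
    (h : mpair c₀ c₁ x y = mpair c₀ c₁ x' y') : x ⊆ x' := by
  have hmem : x ∪ c₀ ∈ mpair c₀ c₁ x' y' := h ▸ mem_mpair_iff.mpr (Or.inl subset_rfl)
  rcases mem_mpair_iff.mp hmem with hsub | hsub
  · exact Disjoint.subset_left_of_subset_union (Set.subset_union_left.trans hsub) hx
  · exact absurd hsub (not_union_subset_union_of_not_subset hc hy')

theorem left_eq_of_mpair_eq (hc : ¬ c₀ ⊆ c₁) (hx : Disjoint x c₀) (hy : Disjoint y c₀)
    (hx' : Disjoint x' c₀) (hy' : Disjoint y' c₀) (h : mpair c₀ c₁ x y = mpair c₀ c₁ x' y') :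
    x = x' :=
  (left_subset_of_mpair_eq hc hx hy' h).antisymm (left_subset_of_mpair_eq hc hx' hy h.symm)

end

theorem mpair_injective {α : Type*} (c₀ c₁ : Set α)
    (hc₀ : ¬ c₀ ⊆ c₁) (hc₁ : ¬ c₁ ⊆ c₀)
    (x y x' y' : Set α)
    (hdata : ∀ d ∈ ({x, y, x', y'} : Set (Set α)),
      Disjoint d c₀ ∧ Disjoint d c₁ ∧ ¬ d ⊆ c₀ ∧ ¬ d ⊆ c₁)
    (h : mpair c₀ c₁ x y = mpair c₀ c₁ x' y') :
    x = x' ∧ y = y' := by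
  obtain ⟨hx₀, hx₁, -⟩ := hdata x (by simp)
  obtain ⟨hy₀, hy₁, -⟩ := hdata y (by simp)
  obtain ⟨hx'₀, hx'₁, -⟩ := hdata x' (by simp)
  obtain ⟨hy'₀, hy'₁, -⟩ := hdata y' (by simp)
  refine ⟨left_eq_of_mpair_eq hc₀ hx₀ hy₀ hx'₀ hy'₀ h, ?_⟩
  rw [mpair_swap, mpair_swap (x := x')] at h
  exact left_eq_of_mpair_eq hc₁ hy₁ hx₁ hy'₁ hx'₁ h
end

section
/- Let R = ⋃_{i∈I} pr(⟨⟨zᵢ,wᵢ⟩⟩) be a magmatic semi-function (zᵢ = zⱼ → wᵢ = wⱼ). If the family {zᵢ : i ∈ I} is pairwise disjoint (zᵢ ∩ zⱼ = ∅ for i ≠ j), then for every z ∈ dom(R), the set R[z] = {w : ⟨⟨z,w⟩⟩ ∈ R} has a greatest element with respect to ⊆, namely the unique wᵢ with z ⊆ zᵢ; hence R is a magmatic function. -/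
/-! Every pair in `R` lies below some generator `⟨⟨z i, w i⟩⟩`, so `z ⊆ z i` and `w ⊆ w i`.
A nonempty `z` meets at most one of the pairwise disjoint `z i`, so all pairs with first
component `z` lie below the same generator, and `w i` is the greatest second component. -/

section MagmaticRelation

variable {α ι : Type*}

/-- The paper's `⋃ i, pr ⟨⟨z i, w i⟩⟩`, with `pr` the powerset. -/
def magmaticRel (pair : Set α → Set α → Set α) (z w : ι → Set α) : Set (Set α) :=
  ⋃ i, {p : Set α | p ⊆ pair (z i) (w i)}

theorem pair_mem_magmaticRel_iff {pair : Set α → Set α → Set α}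
    (hpair : ∀ z w z' w' : Set α, pair z' w' ⊆ pair z w ↔ z' ⊆ z ∧ w' ⊆ w)
    {z w : ι → Set α} {s t : Set α} :
    pair s t ∈ magmaticRel pair z w ↔ ∃ i, s ⊆ z i ∧ t ⊆ w i := by
  simp only [magmaticRel, Set.mem_iUnion, Set.mem_ofPred_eq, hpair]

theorem eq_of_nonempty_subset_of_inter_eq_empty {z : ι → Set α}
    (hdisj : ∀ i j, i ≠ j → z i ∩ z j = ∅) {s : Set α} (hs : s.Nonempty) {i j : ι}
    (hi : s ⊆ z i) (hj : s ⊆ z j) : i = j := by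
  by_contra hij
  obtain ⟨x, hx⟩ := hs
  exact Set.eq_empty_iff_forall_notMem.mp (hdisj i j hij) x ⟨hi hx, hj hx⟩

end MagmaticRelation

theorem semiFunction_is_function_of_pairwise_disjoint_general {α ι : Type*}
    (pair : Set α → Set α → Set α)
    (hpair : ∀ z w z' w' : Set α, pair z' w' ⊆ pair z w ↔ z' ⊆ z ∧ w' ⊆ w)
    (z w : ι → Set α)
    (hdisj : ∀ i j, i ≠ j → z i ∩ z j = ∅)
    (R : Set (Set α)) (hR : R = ⋃ i, {p : Set α | p ⊆ pair (z i) (w i)}) :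
    ∀ zz : Set α, zz.Nonempty →
      (∃ ww : Set α, pair zz ww ∈ R) →
      ∃ i, zz ⊆ z i ∧ pair zz (w i) ∈ R ∧
        ∀ ww : Set α, pair zz ww ∈ R → ww ⊆ w i := by
  change R = magmaticRel pair z w at hR
  subst hR
  simp only [pair_mem_magmaticRel_iff hpair]
  rintro zz hzz ⟨-, i, hzi, -⟩
  refine ⟨i, hzi, ⟨i, hzi, subset_rfl⟩, ?_⟩
  rintro ww ⟨j, hzj, hwj⟩
  rwa [eq_of_nonempty_subset_of_inter_eq_empty hdisj hzz hzi hzj]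

theorem semiFunction_is_function_of_pairwise_disjoint {α ι : Type*}
    (pair : Set α → Set α → Set α)
    (hpair : ∀ z w z' w' : Set α, pair z' w' ⊆ pair z w ↔ z' ⊆ z ∧ w' ⊆ w)
    (z w : ι → Set α)
    (hne : ∀ i, (z i).Nonempty)
    (hsemi : ∀ i j, z i = z j → w i = w j)
    (hdisj : ∀ i j, i ≠ j → z i ∩ z j = ∅)
    (R : Set (Set α)) (hR : R = ⋃ i, {p : Set α | p ⊆ pair (z i) (w i)}) :
    ∀ zz : Set α, zz.Nonempty →
      (∃ ww : Set α, pair zz ww ∈ R) →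
      ∃ i, zz ⊆ z i ∧ pair zz (w i) ∈ R ∧
        ∀ ww : Set α, pair zz ww ∈ R → ww ⊆ w i :=
  semiFunction_is_function_of_pairwise_disjoint_general pair hpair z w hdisj R hR
end
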